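/- There exists a₀ > 0 such that for every a ≥ a₀ there exist a unique μ ∈ ℝ and a unique g ∈ ℝ ∖ {0} satisfying the complex equation a² + 1 − 2μ + 2aμ·i = −2a² g · cosh(πA)/sinh(πA), where A := −2ai/(a+i). In particular there exist infinitely many triples (a, g, μ) with a > 0 and g ≠ 0 satisfying this equation, i.e. the Prandtl spiral constraint is solvable. -/

import Mathlib

/-!
Writing `z = 2π/(a+i)` one has `πA = -z - 2πi`, so periodicity gives `coth(πA) = -coth z`, and the
left-hand side factors as `(a+i)(a+(2μ-1)i)`. Since `(a+i)z = 2π`, the constraint becomes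
`π(a + (2μ-1)i) = a²g · z coth z`: a real linear system in `(μ, g)`, uniquely solvable as soon as
`Re(z coth z) ≠ 0`. As `a → ∞`, `z → 0` and `z coth z → 1`.
-/

/-- The Prandtl-spiral constraint: `a² + 1 − 2μ + 2aμi = −2a²g·cosh(πA)/sinh(πA)`
with `A := −2ai/(a+i)`. -/
def PrandtlConstraint (a g μ : ℝ) : Prop :=
  ((a : ℂ) ^ 2 + 1 - 2 * (μ : ℂ) + 2 * (a : ℂ) * (μ : ℂ) * Complex.I) =
    -2 * (a : ℂ) ^ 2 * (g : ℂ) *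
      (Complex.cosh ((Real.pi : ℂ) * (-2 * (a : ℂ) * Complex.I / ((a : ℂ) + Complex.I))) /
        Complex.sinh ((Real.pi : ℂ) * (-2 * (a : ℂ) * Complex.I / ((a : ℂ) + Complex.I))))

open Filter Topology Real

namespace Complex

theorem ofReal_add_ofReal_mul_I_eq_ofReal_mul_iff {x t r : ℝ} {u : ℂ} (hu : u.re ≠ 0) :
    (x : ℂ) + t * I = r * u ↔ r = x / u.re ∧ t = x * u.im / u.re := by
  simp only [Complex.ext_iff, add_re, add_im, ofReal_re, ofReal_im, mul_re, mul_im, I_re, I_im,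
    mul_zero, zero_mul, sub_zero, add_zero, zero_add, mul_one]
  constructor
  · rintro ⟨hre, him⟩
    have hr : r = x / u.re := by rw [hre]; field_simp
    exact ⟨hr, by rw [him, hr]; ring⟩
  · rintro ⟨rfl, rfl⟩
    constructor <;> field_simp

theorem tendsto_mul_cosh_div_sinh_nhdsNE_zero :
    Tendsto (fun z : ℂ => z * cosh z / sinh z) (𝓝[≠] 0) (𝓝 1) := by
  have hslope : Tendsto (fun z : ℂ => sinh z / z) (𝓝[≠] 0) (𝓝 1) := by
    simpa [slope_fun_def_field, cosh_zero] using (hasDerivAt_sinh 0).tendsto_slope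
  have hcosh : Tendsto cosh (𝓝[≠] 0) (𝓝 1) := by
    simpa using continuous_cosh.continuousWithinAt.tendsto (x := 0) (s := {0}ᶜ)
  have h := hcosh.div hslope one_ne_zero
  rw [div_one] at h
  refine h.congr fun z => ?_
  simp only [Pi.div_apply, div_div_eq_mul_div, mul_comm]

theorem tendsto_div_ofReal_add_I_atTop (c : ℂ) :
    Tendsto (fun a : ℝ => c / (a + I)) atTop (𝓝 0) := by
  have hnorm : Tendsto (fun a : ℝ => ‖(a : ℂ) + I‖) atTop atTop :=
    tendsto_atTop_mono (fun a =>
      (le_abs_self a).trans (by simpa using abs_re_le_norm ((a : ℂ) + I))) tendsto_id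
  simpa [div_eq_mul_inv] using
    (tendsto_inv₀_cobounded.comp (tendsto_norm_atTop_iff_cobounded.mp hnorm)).const_mul c

theorem ofReal_add_I_ne_zero (a : ℝ) : (a : ℂ) + I ≠ 0 := fun h => by
  simpa using congrArg im h

end Complex

open Complex

theorem prandtlConstraint_iff (a g μ : ℝ) :
    PrandtlConstraint a g μ ↔
      ((π * a : ℝ) : ℂ) + (π * (2 * μ - 1) : ℝ) * I =
        (a ^ 2 * g : ℝ) * (2 * π / (a + I) * cosh (2 * π / (a + I)) / sinh (2 * π / (a + I))) := by
  set z : ℂ := 2 * π / (a + I) with hz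
  have haI := ofReal_add_I_ne_zero a
  have hπA : (π : ℂ) * (-2 * a * I / (a + I)) = -(z + 2 * π * I) := by
    rw [hz]; field_simp; ring_nf; rw [I_sq]; ring
  have hcoth : cosh (-(z + 2 * π * I)) / sinh (-(z + 2 * π * I)) = -(cosh z / sinh z) := by
    rw [Complex.cosh_neg, Complex.sinh_neg, cosh_periodic z, sinh_periodic z, div_neg]
  unfold PrandtlConstraint
  rw [hπA, hcoth, mul_div_assoc, hz]
  generalize cosh z / sinh z = C
  push_cast
  constructor
  · intro h
    field_simp
    linear_combination h + (2 * μ - 1) * I_sq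
  · intro h
    field_simp at h
    linear_combination h - (2 * μ - 1) * I_sq

theorem existsUnique_prandtlConstraint {a : ℝ} (ha : a ≠ 0)
    (hu : (2 * π / (a + I) * cosh (2 * π / (a + I)) / sinh (2 * π / (a + I))).re ≠ 0) :
    ∃! p : ℝ × ℝ, p.2 ≠ 0 ∧ PrandtlConstraint a p.2 p.1 := by
  simp_rw [prandtlConstraint_iff, ofReal_add_ofReal_mul_I_eq_ofReal_mul_iff hu]
  set u : ℂ := 2 * π / (a + I) * cosh (2 * π / (a + I)) / sinh (2 * π / (a + I))
  refine ⟨((1 + a * u.im / u.re) / 2, π / (a * u.re)), ⟨by simp [ha, hu, pi_ne_zero], ?_, ?_⟩, ?_⟩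
  · field_simp
  · field_simp; ring
  · rintro ⟨μ, g⟩ ⟨-, hg, hμ⟩
    simp only [Prod.mk.injEq]
    constructor
    · field_simp at hμ ⊢; linarith
    · field_simp at hg ⊢; linarith

theorem eventually_re_mul_cosh_div_sinh_pos :
    ∀ᶠ a : ℝ in atTop,
      0 < (2 * π / (a + I) * cosh (2 * π / (a + I)) / sinh (2 * π / (a + I))).re := by
  have hz : Tendsto (fun a : ℝ => 2 * π / ((a : ℂ) + I)) atTop (𝓝[≠] 0) :=
    tendsto_nhdsWithin_iff.mpr ⟨tendsto_div_ofReal_add_I_atTop _, Eventually.of_forall fun a =>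
      div_ne_zero (by simp [pi_ne_zero]) (ofReal_add_I_ne_zero a)⟩
  have hre := (continuous_re.tendsto 1).comp (tendsto_mul_cosh_div_sinh_nhdsNE_zero.comp hz)
  exact hre.eventually_const_lt (by simp)

/-- There exists `a₀ > 0` such that for every `a ≥ a₀` there exist a unique
`μ ∈ ℝ` and a unique `g ∈ ℝ ∖ {0}` satisfying the Prandtl constraint
`a² + 1 − 2μ + 2aμi = −2a²g·coth(πA)`, `A := −2ai/(a+i)`.  In particular there exist
infinitely many triples `(a, g, μ)` with `a > 0`, `g ≠ 0` satisfying this equation. -/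
theorem prandtl_spiral_solvable :
    (∃ a₀ : ℝ, 0 < a₀ ∧ ∀ a : ℝ, a₀ ≤ a →
      ∃! p : ℝ × ℝ, p.2 ≠ 0 ∧ PrandtlConstraint a p.2 p.1) ∧
    Set.Infinite {t : ℝ × ℝ × ℝ | 0 < t.1 ∧ t.2.1 ≠ 0 ∧ PrandtlConstraint t.1 t.2.1 t.2.2} := by
  obtain ⟨a₁, ha₁⟩ := eventually_atTop.mp eventually_re_mul_cosh_div_sinh_pos
  set a₀ := max a₁ 1
  have ha₀ : 0 < a₀ := lt_max_of_lt_right one_pos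
  have hsolv : ∀ a, a₀ ≤ a → ∃! p : ℝ × ℝ, p.2 ≠ 0 ∧ PrandtlConstraint a p.2 p.1 := fun a ha =>
    existsUnique_prandtlConstraint (ha₀.trans_le ha).ne' (ha₁ a (le_of_max_le_left ha)).ne'
  refine ⟨⟨a₀, ha₀, hsolv⟩, Set.Infinite.of_image Prod.fst ((Set.Ici_infinite a₀).mono ?_)⟩
  intro a ha
  obtain ⟨⟨μ, g⟩, ⟨hg, hP⟩, -⟩ := hsolv a ha
  exact ⟨(a, g, μ), ⟨ha₀.trans_le ha, hg, hP⟩, rfl⟩
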